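/- For every integer n ≥ 13 there exists a K_{1,1,1,8}-intersecting family 𝓕 of subgraphs of K_n with |𝓕| ≥ 71 · 2^{C(n,2) − 33}; note 71 · 2^{C(n,2) − 33} > 2^{C(n,2) − 27}, the trivial bound for K_{1,1,1,8}. -/

import Mathlib

set_option maxRecDepth 10000
set_option maxHeartbeats 1000000


open SimpleGraph

/-- `G` contains a subgraph isomorphic to `H`, i.e. there is an injective
graph homomorphism from `H` to `G`. -/
def ContainsCopy {α β : Type*} (H : SimpleGraph α) (G : SimpleGraph β) : Prop :=
  ∃ f : H →g G, Function.Injective f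

/-- The number of edges of a graph. -/
noncomputable def edgeCount {β : Type*} (G : SimpleGraph β) : ℕ :=
  Nat.card G.edgeSet

/-- A family of graphs on a common vertex type is `H`-intersecting if for any two
members `F₁, F₂` the graph with edge set `E(F₁) ∩ E(F₂)` contains a copy of `H`. -/
def IsIntersectingFamily {α β : Type*} (H : SimpleGraph α)
    (𝓕 : Finset (SimpleGraph β)) : Prop :=
  ∀ F₁ ∈ 𝓕, ∀ F₂ ∈ 𝓕, ContainsCopy H (F₁ ⊓ F₂)

namespace K1118Aux

open Finset

def tri0 : Finset (Fin 13 × Fin 13) := {(0,1),(0,2),(1,2)}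
def blk0 (i : Fin 10) : Finset (Fin 13 × Fin 13) :=
  {(0, ⟨i.1+3, by omega⟩), (1, ⟨i.1+3, by omega⟩), (2, ⟨i.1+3, by omega⟩)}
def B0 : Finset (Fin 13 × Fin 13) := tri0 ∪ Finset.univ.biUnion blk0
def g0 (i : Fin 10) (s : Finset (Fin 3)) : Finset (Fin 13 × Fin 13) :=
  (B0 \ blk0 i) ∪ s.image (fun r => (⟨r.1, by omega⟩, ⟨i.1+3, by omega⟩))
def T0 : Finset (Finset (Fin 13 × Fin 13)) :=
  insert B0 (((Finset.univ : Finset (Fin 10)) ×ˢ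
    (Finset.univ.filter (· ≠ (Finset.univ : Finset (Fin 3))))).image fun p => g0 p.1 p.2)

theorem T0_card : T0.card = 71 := by decide
theorem B0_card : B0.card = 33 := by decide
theorem B0_lt : ∀ p ∈ B0, p.1 < p.2 := by decide
theorem blk_sub : ∀ i j : Fin 10, i ≠ j → blk0 j ⊆ B0 \ blk0 i := by decide
theorem tri_sub : ∀ i : Fin 10, tri0 ⊆ B0 \ blk0 i := by decide
theorem blk_sub_B0 : ∀ i : Fin 10, blk0 i ⊆ B0 := by decide
theorem tri_sub_B0 : tri0 ⊆ B0 := by decide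

theorem mem_T0 {t : Finset (Fin 13 × Fin 13)} (ht : t ∈ T0) :
    t = B0 ∨ ∃ i s, t = g0 i s := by
  simp only [T0, Finset.mem_insert, Finset.mem_image, Finset.mem_product] at ht
  rcases ht with h | ⟨⟨i, s⟩, _, h⟩
  · exact Or.inl h
  · exact Or.inr ⟨i, s, h.symm⟩

theorem g0_sub_B0 (i : Fin 10) (s : Finset (Fin 3)) : g0 i s ⊆ B0 := by
  apply Finset.union_subset (Finset.sdiff_subset)
  intro p hp
  simp only [Finset.mem_image] at hp
  obtain ⟨r, _, rfl⟩ := hp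
  apply blk_sub_B0 i
  have : r.1 = 0 ∨ r.1 = 1 ∨ r.1 = 2 := by omega
  simp only [blk0, Finset.mem_insert, Finset.mem_singleton, Prod.mk.injEq]
  rcases this with h | h | h <;> simp [Fin.ext_iff, h]

theorem t_sub_B0 {t : Finset (Fin 13 × Fin 13)} (ht : t ∈ T0) : t ⊆ B0 := by
  rcases mem_T0 ht with rfl | ⟨i, s, rfl⟩
  · exact Finset.Subset.refl _
  · exact g0_sub_B0 i s

theorem good_index {t : Finset (Fin 13 × Fin 13)} (ht : t ∈ T0) :
    ∃ i : Fin 10, tri0 ⊆ t ∧ ∀ j : Fin 10, j ≠ i → blk0 j ⊆ t := by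
  rcases mem_T0 ht with rfl | ⟨i, s, rfl⟩
  · exact ⟨0, tri_sub_B0, fun j _ => blk_sub_B0 j⟩
  · refine ⟨i, ?_, fun j hj => ?_⟩
    · exact (tri_sub i).trans Finset.subset_union_left
    · exact (blk_sub i j hj.symm).trans Finset.subset_union_left

section Lift
variable (m : ℕ)

def uu : Fin 13 → Fin (m+13) := Fin.castLE (by omega)

theorem uu_strictMono : StrictMono (uu m) := Fin.strictMono_castLE _
theorem uu_inj : Function.Injective (uu m) := (uu_strictMono m).injective

def liftp (p : Fin 13 × Fin 13) : Sym2 (Fin (m+13)) := s(uu m p.1, uu m p.2)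

theorem liftp_inj {p q : Fin 13 × Fin 13} (hp : p.1 < p.2) (hq : q.1 < q.2)
    (h : liftp m p = liftp m q) : p = q := by
  rw [liftp, liftp, Sym2.eq_iff] at h
  rcases h with ⟨h1, h2⟩ | ⟨h1, h2⟩
  · exact Prod.ext (uu_inj m h1) (uu_inj m h2)
  · exfalso
    have h3 := (uu_strictMono m) hp
    have h4 := (uu_strictMono m) hq
    rw [h1, h2] at h3
    exact absurd h4 (by omega)

theorem liftp_injOn : Set.InjOn (liftp m) ↑B0 := fun p hp q hq h =>
  liftp_inj m (B0_lt p hp) (B0_lt q hq) h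

def liftF (t : Finset (Fin 13 × Fin 13)) : Finset (Sym2 (Fin (m+13))) := t.image (liftp m)

theorem liftF_inj {t₁ t₂ : Finset (Fin 13 × Fin 13)} (h1 : t₁ ⊆ B0) (h2 : t₂ ⊆ B0)
    (h : liftF m t₁ = liftF m t₂) : t₁ = t₂ := by
  ext p
  constructor <;> intro hp
  · have : liftp m p ∈ liftF m t₂ := h ▸ Finset.mem_image_of_mem _ hp
    obtain ⟨q, hq, hqe⟩ := Finset.mem_image.1 this
    rwa [liftp_inj m (B0_lt q (h2 hq)) (B0_lt p (h1 hp)) hqe] at hq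
  · have : liftp m p ∈ liftF m t₁ := h ▸ Finset.mem_image_of_mem _ hp
    obtain ⟨q, hq, hqe⟩ := Finset.mem_image.1 this
    rwa [liftp_inj m (B0_lt q (h1 hq)) (B0_lt p (h2 hp)) hqe] at hq

theorem liftF_nondiag {t : Finset (Fin 13 × Fin 13)} (ht : t ⊆ B0) :
    ∀ e ∈ liftF m t, ¬ e.IsDiag := by
  intro e he
  obtain ⟨p, hp, rfl⟩ := Finset.mem_image.1 he
  have := B0_lt p (ht hp)
  simp only [liftp, Sym2.isDiag_iff_proj_eq]
  exact fun h => absurd ((uu_strictMono m) this) (by rw [h]; omega)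

theorem liftF_sub_top {t : Finset (Fin 13 × Fin 13)} (ht : t ⊆ B0) :
    liftF m t ⊆ (⊤ : SimpleGraph (Fin (m+13))).edgeFinset := by
  intro e he
  rw [mem_edgeFinset, edgeSet_top]
  exact liftF_nondiag m ht e he

def Rest : Finset (Sym2 (Fin (m+13))) :=
  (⊤ : SimpleGraph (Fin (m+13))).edgeFinset \ liftF m B0

theorem liftF_B0_card : (liftF m B0).card = 33 := by
  rw [liftF, Finset.card_image_of_injOn (liftp_injOn m), B0_card]

theorem topcard : ((⊤ : SimpleGraph (Fin (m+13))).edgeFinset).card = (m+13).choose 2 := by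
  rw [card_edgeFinset_top_eq_card_choose_two, Fintype.card_fin]

theorem Rest_card : (Rest m).card = (m+13).choose 2 - 33 := by
  rw [Rest, card_sdiff_of_subset (liftF_sub_top m (Finset.Subset.refl _)), liftF_B0_card, topcard]

def FF (t : Finset (Fin 13 × Fin 13)) (R : Finset (Sym2 (Fin (m+13)))) :
    SimpleGraph (Fin (m+13)) := fromEdgeSet ↑(liftF m t ∪ R)

theorem FF_edgeSet {t : Finset (Fin 13 × Fin 13)} (ht : t ⊆ B0)
    {R : Finset (Sym2 (Fin (m+13)))} (hR : R ⊆ Rest m) :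
    (FF m t R).edgeSet = ↑(liftF m t ∪ R) := by
  rw [FF, edgeSet_fromEdgeSet]
  apply sdiff_eq_left.mpr
  rw [Set.disjoint_left]
  intro e he hd
  rw [Finset.coe_union, Set.mem_union] at he
  rcases he with he | he
  · exact liftF_nondiag m ht e he hd
  · have := (Finset.mem_sdiff.1 (hR he)).1
    rw [mem_edgeFinset, edgeSet_top] at this
    exact this hd

theorem liftF_mono {t₁ t₂ : Finset (Fin 13 × Fin 13)} (h : t₁ ⊆ t₂) :
    liftF m t₁ ⊆ liftF m t₂ := Finset.image_subset_image h

theorem inter_liftB0 {t : Finset (Fin 13 × Fin 13)} (ht : t ⊆ B0)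
    {R : Finset (Sym2 (Fin (m+13)))} (hR : R ⊆ Rest m) :
    (liftF m t ∪ R) ∩ liftF m B0 = liftF m t := by
  rw [Finset.union_inter_distrib_right]
  have h1 : liftF m t ∩ liftF m B0 = liftF m t :=
    Finset.inter_eq_left.2 (liftF_mono m ht)
  have h2 : R ∩ liftF m B0 = ∅ := by
    rw [← Finset.disjoint_iff_inter_eq_empty]
    exact Finset.disjoint_left.2 fun e he hb => (Finset.mem_sdiff.1 (hR he)).2 hb
  rw [h1, h2, Finset.union_empty]

theorem sdiff_liftB0 {t : Finset (Fin 13 × Fin 13)} (ht : t ⊆ B0)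
    {R : Finset (Sym2 (Fin (m+13)))} (hR : R ⊆ Rest m) :
    (liftF m t ∪ R) \ liftF m B0 = R := by
  rw [Finset.union_sdiff_distrib]
  have h1 : liftF m t \ liftF m B0 = ∅ :=
    Finset.sdiff_eq_empty_iff_subset.2 (liftF_mono m ht)
  have h2 : R \ liftF m B0 = R := Finset.sdiff_eq_self_of_disjoint
    (Finset.disjoint_left.2 fun e he hb => (Finset.mem_sdiff.1 (hR he)).2 hb)
  rw [h1, h2, Finset.empty_union]

theorem FF_inj {t₁ t₂ : Finset (Fin 13 × Fin 13)} (h1 : t₁ ⊆ B0) (h2 : t₂ ⊆ B0)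
    {R₁ R₂ : Finset (Sym2 (Fin (m+13)))} (hR1 : R₁ ⊆ Rest m) (hR2 : R₂ ⊆ Rest m)
    (h : FF m t₁ R₁ = FF m t₂ R₂) : t₁ = t₂ ∧ R₁ = R₂ := by
  have he : (liftF m t₁ ∪ R₁ : Finset (Sym2 (Fin (m+13)))) = liftF m t₂ ∪ R₂ := by
    have := congrArg SimpleGraph.edgeSet h
    rw [FF_edgeSet m h1 hR1, FF_edgeSet m h2 hR2] at this
    exact_mod_cast this
  constructor
  · apply liftF_inj m h1 h2
    rw [← inter_liftB0 m h1 hR1, ← inter_liftB0 m h2 hR2, he]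
  · rw [← sdiff_liftB0 m h1 hR1, ← sdiff_liftB0 m h2 hR2, he]

theorem FF_adj {t : Finset (Fin 13 × Fin 13)} (ht : t ⊆ B0)
    {R : Finset (Sym2 (Fin (m+13)))} {p : Fin 13 × Fin 13} (hp : p ∈ t) :
    (FF m t R).Adj (uu m p.1) (uu m p.2) := by
  rw [FF, fromEdgeSet_adj]
  refine ⟨?_, ?_⟩
  · rw [Finset.mem_coe, Finset.mem_union]
    exact Or.inl (Finset.mem_image_of_mem _ hp)
  · have := (uu_strictMono m) (B0_lt p (ht hp))
    omega

abbrev V4 := (Σ i : Fin 4, ![Fin 1, Fin 1, Fin 1, Fin 8] i)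

def phi (c : Fin 8 → Fin 10) : V4 → Fin (m+13) :=
  fun x => match x with
  | ⟨0, _⟩ => uu m (⟨0, by omega⟩ : Fin 13)
  | ⟨1, _⟩ => uu m (⟨1, by omega⟩ : Fin 13)
  | ⟨2, _⟩ => uu m (⟨2, by omega⟩ : Fin 13)
  | ⟨3, k⟩ => uu m (⟨(c k).1 + 3, by omega⟩ : Fin 13)

theorem phi_inj (c : Fin 8 → Fin 10) (hc : Function.Injective c) :
    Function.Injective (phi m c) := by
  rintro ⟨i, xk⟩ ⟨j, yk⟩ h
  fin_cases i <;> fin_cases j <;>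
    simp only [phi, uu, Fin.isValue, Fin.castLE, Fin.mk.injEq] at h ⊢ <;>
  first
    | omega
    | exact congrArg _ (Subsingleton.elim (α := Fin 1) xk yk)
    | (have h2 : c xk = c yk := Fin.val_injective (by omega)
       exact congrArg _ (hc h2))

theorem phi_hom (G : SimpleGraph (Fin (m+13))) (c : Fin 8 → Fin 10)
    (htri : ∀ p ∈ tri0, G.Adj (uu m p.1) (uu m p.2))
    (hblk : ∀ (k : Fin 8), ∀ p ∈ blk0 (c k), G.Adj (uu m p.1) (uu m p.2)) :
    ∀ {x y : V4}, x.1 ≠ y.1 → G.Adj (phi m c x) (phi m c y) := by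
  rintro ⟨i, xk⟩ ⟨j, yk⟩ hne
  have hv : (i : ℕ) ≠ (j : ℕ) := fun hv => hne (Fin.val_injective hv)
  fin_cases i <;> fin_cases j <;> simp only [phi, Fin.isValue] <;>
  first
    | exact absurd rfl hv
    | exact htri (⟨0, by omega⟩, ⟨1, by omega⟩) (by decide)
    | exact htri (⟨0, by omega⟩, ⟨2, by omega⟩) (by decide)
    | exact htri (⟨1, by omega⟩, ⟨2, by omega⟩) (by decide)
    | exact (htri (⟨0, by omega⟩, ⟨1, by omega⟩) (by decide)).symm
    | exact (htri (⟨0, by omega⟩, ⟨2, by omega⟩) (by decide)).symm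
    | exact (htri (⟨1, by omega⟩, ⟨2, by omega⟩) (by decide)).symm
    | exact hblk yk (⟨0, by omega⟩, ⟨(c yk).1+3, by omega⟩) (by simp [blk0, Fin.ext_iff])
    | exact hblk yk (⟨1, by omega⟩, ⟨(c yk).1+3, by omega⟩) (by simp [blk0, Fin.ext_iff])
    | exact hblk yk (⟨2, by omega⟩, ⟨(c yk).1+3, by omega⟩) (by simp [blk0, Fin.ext_iff])
    | exact (hblk xk (⟨0, by omega⟩, ⟨(c xk).1+3, by omega⟩) (by simp [blk0, Fin.ext_iff])).symm
    | exact (hblk xk (⟨1, by omega⟩, ⟨(c xk).1+3, by omega⟩) (by simp [blk0, Fin.ext_iff])).symm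
    | exact (hblk xk (⟨2, by omega⟩, ⟨(c xk).1+3, by omega⟩) (by simp [blk0, Fin.ext_iff])).symm

end Lift

end K1118Aux

open Finset K1118Aux

/-- For every `n ≥ 13` there is a `K_{1,1,1,8}`-intersecting family of
subgraphs of `K_n` of size at least `71 · 2^(C(n,2) − 33)`, and this quantity exceeds
the trivial bound `2^(C(n,2) − 27)`. -/
theorem K1118_bound (n : ℕ) (hn : 13 ≤ n) :
    (∃ 𝓕 : Finset (SimpleGraph (Fin n)),
      IsIntersectingFamily (completeMultipartiteGraph ![Fin 1, Fin 1, Fin 1, Fin 8]) 𝓕 ∧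
      71 * 2 ^ (n.choose 2 - 33) ≤ 𝓕.card) ∧
    71 * 2 ^ (n.choose 2 - 33) > 2 ^ (n.choose 2 - 27) := by
  obtain ⟨m, rfl⟩ : ∃ m, n = m + 13 := ⟨n - 13, by omega⟩
  have hN : 78 ≤ (m+13).choose 2 := by
    calc (78 : ℕ) = Nat.choose 13 2 := by decide
    _ ≤ (m+13).choose 2 := Nat.choose_le_choose 2 (by omega)
  constructor
  · classical
    refine ⟨(T0 ×ˢ (Rest m).powerset).image fun p => FF m p.1 p.2, ?_, ?_⟩
    · rintro F₁ hF₁ F₂ hF₂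
      obtain ⟨⟨t₁, R₁⟩, hp₁, rfl⟩ := Finset.mem_image.1 hF₁
      obtain ⟨⟨t₂, R₂⟩, hp₂, rfl⟩ := Finset.mem_image.1 hF₂
      rw [Finset.mem_product] at hp₁ hp₂
      obtain ⟨ht₁, hR₁⟩ := hp₁
      obtain ⟨ht₂, hR₂⟩ := hp₂
      rw [Finset.mem_powerset] at hR₁ hR₂
      obtain ⟨i₁, htri₁, hblk₁⟩ := good_index ht₁
      obtain ⟨i₂, htri₂, hblk₂⟩ := good_index ht₂
      -- choose 8 indices avoiding i₁ i₂
      have hScard : 8 ≤ ((Finset.univ : Finset (Fin 10)) \ {i₁, i₂}).card := by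
        have h1 : ({i₁, i₂} : Finset (Fin 10)).card ≤ 2 :=
          (Finset.card_insert_le _ _).trans (by simp)
        have h2 := Finset.card_sdiff_of_subset (Finset.subset_univ ({i₁, i₂} : Finset (Fin 10)))
        rw [Finset.card_univ, Fintype.card_fin] at h2
        omega
      obtain ⟨S', hS'sub, hS'card⟩ := Finset.exists_subset_card_eq hScard
      let e := S'.equivFinOfCardEq hS'card
      set c : Fin 8 → Fin 10 := fun k => ((e.symm k : S') : Fin 10) with hc_def
      have hc : Function.Injective c := fun a b h =>
        e.symm.injective (Subtype.ext h)
      have hmem : ∀ k : Fin 8, c k ≠ i₁ ∧ c k ≠ i₂ := by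
        intro k
        have := hS'sub (e.symm k).2
        rw [Finset.mem_sdiff] at this
        have h2 := this.2
        simp only [Finset.mem_insert, Finset.mem_singleton, not_or] at h2
        exact h2
      have htri : ∀ p ∈ tri0, (FF m t₁ R₁ ⊓ FF m t₂ R₂).Adj (uu m p.1) (uu m p.2) := by
        intro p hp
        exact ⟨FF_adj m (t_sub_B0 ht₁) (htri₁ hp), FF_adj m (t_sub_B0 ht₂) (htri₂ hp)⟩
      have hblk : ∀ (k : Fin 8), ∀ p ∈ blk0 (c k),
          (FF m t₁ R₁ ⊓ FF m t₂ R₂).Adj (uu m p.1) (uu m p.2) := by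
        intro k p hp
        exact ⟨FF_adj m (t_sub_B0 ht₁) (hblk₁ (c k) (hmem k).1 hp),
               FF_adj m (t_sub_B0 ht₂) (hblk₂ (c k) (hmem k).2 hp)⟩
      exact ⟨⟨phi m c, fun {x y} h => phi_hom m _ c htri hblk (by simpa using h)⟩,
        phi_inj m c hc⟩
    · rw [Finset.card_image_of_injOn, Finset.card_product, Finset.card_powerset,
        T0_card, Rest_card]
      intro p hp q hq h
      rw [Finset.mem_coe, Finset.mem_product, Finset.mem_powerset] at hp hq
      obtain ⟨h1, h2⟩ := FF_inj m (t_sub_B0 hp.1) (t_sub_B0 hq.1) hp.2 hq.2 h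
      exact Prod.ext h1 h2
  · have h6 : (m+13).choose 2 - 27 = 6 + ((m+13).choose 2 - 33) := by omega
    rw [h6, pow_add]
    have : (2:ℕ)^6 = 64 := by norm_num
    rw [this]
    exact Nat.mul_lt_mul_of_lt_of_le (by norm_num) (le_refl _) (Nat.pow_pos (by norm_num))
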